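/- Let (H,R) be a quasi-triangular bialgebra with R = Σ sᵢ⊗tᵢ ∈ H⊗H, let V be a left H-module, and let α : V → V be an H-module morphism. Then B = τ∘R : V⊗V → V⊗V, given by B(v⊗w) = Σ tᵢ·w ⊗ sᵢ·v, commutes with α⊗α and satisfies the Hom-Yang-Baxter equation (α⊗B)∘(B⊗α)∘(α⊗B) = (B⊗α)∘(α⊗B)∘(B⊗α). -/

import Mathlib

/-!
Since `α` is `H`-linear, `B` is natural in each tensor slot separately:
`B ∘ (α ⊗ 1) = (1 ⊗ α) ∘ B` and `B ∘ (1 ⊗ α) = (α ⊗ 1) ∘ B`. Pushing the three copies of `α`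
to the front of both sides of the Hom-Yang–Baxter equation turns them into `α ⊗ α ⊗ α` composed
with the two sides of the ordinary braid relation for `B`. Writing `B = τ ∘ R`, the braid
relation is the quantum Yang–Baxter equation `R₁₂ R₁₃ R₂₃ = R₂₃ R₁₃ R₁₂` moved past the flips,
and the latter comes from `Δᵒᵖ(x) R = R Δ(x)` applied to `(Δ ⊗ id)(R) = R₁₃ R₂₃`.
-/

open TensorProduct

section QT

variable {k H V : Type*} [Field k] [Ring H] [Bialgebra k H]
  [AddCommGroup V] [Module k V] [Module H V]
  [IsScalarTower k H V] [SMulCommClass k H V]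

/-- The `H`-action on `V` as a `k`-bilinear map. -/
noncomputable def actHom (k H V : Type*) [CommRing k] [Ring H] [Algebra k H]
    [AddCommGroup V] [Module k V] [Module H V]
    [IsScalarTower k H V] [SMulCommClass k H V] : H →ₗ[k] V →ₗ[k] V :=
  LinearMap.mk₂ k (fun x v => x • v)
    (fun x y v => add_smul x y v)
    (fun c x v => smul_assoc c x v)
    (fun x v w => smul_add x v w)
    (fun c x v => smul_comm x c v)

/-- `x ⊗ y ↦ x ⊗ (y ⊗ 1)`, giving `R₁₂` inside `H ⊗ (H ⊗ H)`. -/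
noncomputable def iota12 (k H : Type*) [CommRing k] [Ring H] [Algebra k H] :
    H ⊗[k] H →ₗ[k] H ⊗[k] (H ⊗[k] H) :=
  TensorProduct.map LinearMap.id ((TensorProduct.mk k H H).flip 1)

/-- `x ⊗ y ↦ x ⊗ (1 ⊗ y)`, giving `R₁₃` inside `H ⊗ (H ⊗ H)`. -/
noncomputable def iota13 (k H : Type*) [CommRing k] [Ring H] [Algebra k H] :
    H ⊗[k] H →ₗ[k] H ⊗[k] (H ⊗[k] H) :=
  TensorProduct.map LinearMap.id (TensorProduct.mk k H H 1)

/-- The operator `B = τ ∘ R` on `V ⊗ V`: `v ⊗ w ↦ Σ tᵢ • w ⊗ sᵢ • v`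
for `R = Σ sᵢ ⊗ tᵢ`. -/
noncomputable def qtB (k H V : Type*) [CommRing k] [Ring H] [Algebra k H]
    [AddCommGroup V] [Module k V] [Module H V]
    [IsScalarTower k H V] [SMulCommClass k H V] (R : H ⊗[k] H) :
    V ⊗[k] V →ₗ[k] V ⊗[k] V :=
  (TensorProduct.comm k V V).toLinearMap ∘ₗ
    TensorProduct.homTensorHomMap (RingHom.id k) V V V V
      ((TensorProduct.map (actHom k H V) (actHom k H V)) R)

/-- The operator `α ⊗ B` on `(V ⊗ V) ⊗ V` obtained via the associator. -/
noncomputable def leftTwist {k V : Type*} [CommRing k] [AddCommGroup V] [Module k V]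
    (α : V →ₗ[k] V) (B : V ⊗[k] V →ₗ[k] V ⊗[k] V) :
    (V ⊗[k] V) ⊗[k] V →ₗ[k] (V ⊗[k] V) ⊗[k] V :=
  (TensorProduct.assoc k V V V).symm.toLinearMap ∘ₗ
    TensorProduct.map α B ∘ₗ (TensorProduct.assoc k V V V).toLinearMap

end QT

-- `aᵢ` plays `α` acting in slot `i`, and `b₁₂`, `b₂₃` play `B` acting in slots `1,2` and `2,3`.
theorem hom_braid_of_braid {M : Type*} [Monoid M] {a₁ a₂ a₃ b₁₂ b₂₃ : M}
    (hb : b₂₃ * (b₁₂ * b₂₃) = b₁₂ * (b₂₃ * b₁₂))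
    (h₁ : b₁₂ * a₁ = a₂ * b₁₂) (h₂ : b₁₂ * a₂ = a₁ * b₁₂)
    (h₃ : b₂₃ * a₂ = a₃ * b₂₃) (h₄ : b₂₃ * a₃ = a₂ * b₂₃)
    (ha : a₁ * a₂ * a₃ = a₃ * a₂ * a₁) :
    a₁ * b₂₃ * (a₃ * b₁₂ * (a₁ * b₂₃)) = a₃ * b₁₂ * (a₁ * b₂₃ * (a₃ * b₁₂)) :=
  calc a₁ * b₂₃ * (a₃ * b₁₂ * (a₁ * b₂₃)) = a₁ * (b₂₃ * a₃) * (b₁₂ * a₁) * b₂₃ := by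
        simp only [mul_assoc]
    _ = a₁ * a₂ * (b₂₃ * a₂) * b₁₂ * b₂₃ := by rw [h₄, h₁]; simp only [mul_assoc]
    _ = a₁ * a₂ * a₃ * (b₂₃ * (b₁₂ * b₂₃)) := by rw [h₃]; simp only [mul_assoc]
    _ = a₃ * a₂ * a₁ * (b₁₂ * (b₂₃ * b₁₂)) := by rw [ha, hb]
    _ = a₃ * a₂ * (b₁₂ * a₂) * b₂₃ * b₁₂ := by rw [h₂]; simp only [mul_assoc]
    _ = a₃ * (b₁₂ * a₁) * (b₂₃ * a₃) * b₁₂ := by rw [h₁, h₄]; simp only [mul_assoc]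
    _ = a₃ * b₁₂ * (a₁ * b₂₃ * (a₃ * b₁₂)) := by simp only [mul_assoc]

section LeftTwist

variable {k V : Type*} [CommRing k] [AddCommGroup V] [Module k V]

theorem leftTwist_eq_conjAlgEquiv (f : V →ₗ[k] V) (g : V ⊗[k] V →ₗ[k] V ⊗[k] V) :
    leftTwist f g = (TensorProduct.assoc k V V V).symm.conjAlgEquiv k (map f g) :=
  rfl

theorem leftTwist_comp (f f' : V →ₗ[k] V) (g g' : V ⊗[k] V →ₗ[k] V ⊗[k] V) :
    leftTwist f g ∘ₗ leftTwist f' g' = leftTwist (f ∘ₗ f') (g ∘ₗ g') := by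
  simp only [leftTwist_eq_conjAlgEquiv, ← Module.End.mul_eq_comp, ← map_mul,
    TensorProduct.map_mul]

theorem leftTwist_map (f g h : V →ₗ[k] V) : leftTwist f (map g h) = map (map f g) h := by
  simp [leftTwist, map_map_comp_assoc_eq, ← LinearMap.comp_assoc]

theorem leftTwist_hom_braid_of_braid {B : V ⊗[k] V →ₗ[k] V ⊗[k] V} {α : V →ₗ[k] V}
    (hα₁ : B ∘ₗ α.rTensor V = α.lTensor V ∘ₗ B) (hα₂ : B ∘ₗ α.lTensor V = α.rTensor V ∘ₗ B)
    (hB : leftTwist LinearMap.id B ∘ₗ B.rTensor V ∘ₗ leftTwist LinearMap.id B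
      = B.rTensor V ∘ₗ leftTwist LinearMap.id B ∘ₗ B.rTensor V) :
    leftTwist α B ∘ₗ map B α ∘ₗ leftTwist α B = map B α ∘ₗ leftTwist α B ∘ₗ map B α := by
  have e₁ : leftTwist α B = (α.rTensor V).rTensor V ∘ₗ leftTwist LinearMap.id B := by
    rw [LinearMap.rTensor, LinearMap.rTensor, ← leftTwist_map, map_id, leftTwist_comp]; rfl
  have e₃ : map B α = α.lTensor (V ⊗[k] V) ∘ₗ B.rTensor V := by
    rw [LinearMap.rTensor, LinearMap.lTensor, ← map_comp]; rfl
  have l₂ : (α.lTensor V).rTensor V = leftTwist LinearMap.id (α.rTensor V) :=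
    (leftTwist_map _ _ _).symm
  have l₃ : α.lTensor (V ⊗[k] V) = leftTwist LinearMap.id (α.lTensor V) := by
    rw [LinearMap.lTensor, LinearMap.lTensor, leftTwist_map, map_id]
  rw [e₁, e₃]
  refine hom_braid_of_braid (a₂ := (α.lTensor V).rTensor V) hB ?_ ?_ ?_ ?_ ?_
  · simp only [Module.End.mul_eq_comp, ← LinearMap.rTensor_comp, hα₁]
  · simp only [Module.End.mul_eq_comp, ← LinearMap.rTensor_comp, hα₂]
  · simp only [Module.End.mul_eq_comp, l₂, l₃, leftTwist_comp, hα₁, LinearMap.id_comp]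
  · simp only [Module.End.mul_eq_comp, l₂, l₃, leftTwist_comp, hα₂, LinearMap.id_comp]
  · exact TensorProduct.ext_threefold fun u v w => rfl

end LeftTwist

section QuantumYangBaxter

variable {k H : Type*} [CommRing k] [Ring H]

theorem iota12_eq_assoc [Algebra k H] (S : H ⊗[k] H) :
    iota12 k H S = Algebra.TensorProduct.assoc k k k H H H (S ⊗ₜ 1) := by
  induction S using TensorProduct.induction_on with
  | zero => simp
  | add S S' hS hS' => simp only [map_add, add_tmul, hS, hS']
  | tmul x y => rfl

theorem leftComm_iota13 [Algebra k H] (S : H ⊗[k] H) :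
    Algebra.TensorProduct.leftComm k H H H (iota13 k H S) = 1 ⊗ₜ S := by
  induction S using TensorProduct.induction_on with
  | zero => simp
  | add S S' hS hS' => simp only [map_add, tmul_add, hS, hS']
  | tmul x y => rfl

theorem leftComm_one_tmul [Algebra k H] (S : H ⊗[k] H) :
    Algebra.TensorProduct.leftComm k H H H (1 ⊗ₜ S) = iota13 k H S := by
  induction S using TensorProduct.induction_on with
  | zero => simp
  | add S S' hS hS' => simp only [map_add, tmul_add, hS, hS']
  | tmul x y => rfl

noncomputable def swap₂₃ (k H : Type*) [CommRing k] [Ring H] [Algebra k H] :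
    H ⊗[k] (H ⊗[k] H) ≃ₐ[k] H ⊗[k] (H ⊗[k] H) :=
  Algebra.TensorProduct.congr AlgEquiv.refl (Algebra.TensorProduct.comm k H H)

theorem swap₂₃_iota12 [Algebra k H] (S : H ⊗[k] H) :
    swap₂₃ k H (iota12 k H S) = iota13 k H S := by
  induction S using TensorProduct.induction_on with
  | zero => simp
  | add S S' hS hS' => simp only [map_add, hS, hS']
  | tmul x y => rfl

theorem swap₂₃_iota13 [Algebra k H] (S : H ⊗[k] H) :
    swap₂₃ k H (iota13 k H S) = iota12 k H S := by
  induction S using TensorProduct.induction_on with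
  | zero => simp
  | add S S' hS hS' => simp only [map_add, hS, hS']
  | tmul x y => rfl

theorem assoc_map_comm_id [Algebra k H] (X : (H ⊗[k] H) ⊗[k] H) :
    TensorProduct.assoc k H H H (map (TensorProduct.comm k H H).toLinearMap LinearMap.id X)
      = Algebra.TensorProduct.leftComm k H H H (TensorProduct.assoc k H H H X) := by
  induction X using TensorProduct.induction_on with
  | zero => simp
  | add X X' hX hX' => simp only [map_add, hX, hX']
  | tmul x y =>
    induction x using TensorProduct.induction_on with
    | zero => simp
    | add x x' hx hx' => simp only [map_add, add_tmul, hx, hx']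
    | tmul x z => rfl

theorem tmul_one_mul_map_comul [Bialgebra k H] (R : H ⊗[k] H)
    (hR : ∀ x : H, TensorProduct.comm k H H (Coalgebra.comul x) * R = R * Coalgebra.comul x)
    (W : H ⊗[k] H) :
    (R ⊗ₜ[k] (1 : H)) * map Coalgebra.comul LinearMap.id W
      = map ((TensorProduct.comm k H H).toLinearMap ∘ₗ Coalgebra.comul) LinearMap.id W
          * (R ⊗ₜ[k] (1 : H)) := by
  induction W using TensorProduct.induction_on with
  | zero => simp
  | add W W' hW hW' => simp only [map_add, mul_add, add_mul, hW, hW']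
  | tmul x y => simp [Algebra.TensorProduct.tmul_mul_tmul, hR]

theorem quantum_yang_baxter [Bialgebra k H] (R : H ⊗[k] H)
    (hR1 : ∀ x : H, TensorProduct.comm k H H (Coalgebra.comul x) * R = R * Coalgebra.comul x)
    (hR2 : TensorProduct.assoc k H H H (map Coalgebra.comul LinearMap.id R)
      = iota13 k H R * ((1 : H) ⊗ₜ[k] R)) :
    iota12 k H R * iota13 k H R * (1 ⊗ₜ R) = (1 ⊗ₜ R) * iota13 k H R * iota12 k H R := by
  have h := congrArg (Algebra.TensorProduct.assoc k k k H H H) (tmul_one_mul_map_comul R hR1 R)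
  have hop : Algebra.TensorProduct.assoc k k k H H H
      (map ((TensorProduct.comm k H H).toLinearMap ∘ₗ Coalgebra.comul) LinearMap.id R)
        = Algebra.TensorProduct.leftComm k H H H
            (TensorProduct.assoc k H H H (map Coalgebra.comul LinearMap.id R)) := by
    rw [← assoc_map_comm_id, map_map]; rfl
  rw [map_mul, map_mul, ← iota12_eq_assoc, hop, hR2, map_mul, leftComm_iota13,
    leftComm_one_tmul] at h
  rw [mul_assoc, ← hR2, ← h]
  rfl

end QuantumYangBaxter

section Action

variable (k H V : Type*) [CommRing k] [Ring H] [Algebra k H]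
  [AddCommGroup V] [Module k V] [Module H V] [IsScalarTower k H V]

noncomputable def lsmul₂ : H ⊗[k] H →ₐ[k] Module.End k (V ⊗[k] V) :=
  Module.endTensorEndAlgHom.comp
    (Algebra.TensorProduct.map (Algebra.lsmul k k V) (Algebra.lsmul k k V))

noncomputable def lsmul₃ : H ⊗[k] (H ⊗[k] H) →ₐ[k] Module.End k (V ⊗[k] (V ⊗[k] V)) :=
  Module.endTensorEndAlgHom.comp (Algebra.TensorProduct.map (Algebra.lsmul k k V) (lsmul₂ k H V))

variable {k H V}

theorem qtB_eq_comm_mul_lsmul₂ (R : H ⊗[k] H) :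
    qtB k H V R = (TensorProduct.comm k V V).toLinearMap * lsmul₂ k H V R := by
  have h : LinearMap.mulLeft k (TensorProduct.comm k V V).toLinearMap ∘ₗ
      homTensorHomMap (RingHom.id k) V V V V ∘ₗ map (actHom k H V) (actHom k H V)
        = LinearMap.mulLeft k (TensorProduct.comm k V V).toLinearMap ∘ₗ
            (lsmul₂ k H V).toLinearMap := by
    ext x y u v; rfl
  exact LinearMap.congr_fun h R

theorem lsmul₂_mul_map (S : H ⊗[k] H) {f g : V →ₗ[k] V}
    (hf : ∀ (x : H) (v : V), f (x • v) = x • f v) (hg : ∀ (x : H) (v : V), g (x • v) = x • g v) :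
    lsmul₂ k H V S * map f g = map f g * lsmul₂ k H V S := by
  have h : LinearMap.mulRight k (map f g) ∘ₗ (lsmul₂ k H V).toLinearMap
      = LinearMap.mulLeft k (map f g) ∘ₗ (lsmul₂ k H V).toLinearMap := by
    ext x y u v
    simp [lsmul₂, Module.endTensorEndAlgHom_apply, hf, hg]
  exact LinearMap.congr_fun h S

theorem qtB_comp_map (R : H ⊗[k] H) {f g : V →ₗ[k] V}
    (hf : ∀ (x : H) (v : V), f (x • v) = x • f v) (hg : ∀ (x : H) (v : V), g (x • v) = x • g v) :
    qtB k H V R ∘ₗ map f g = map g f ∘ₗ qtB k H V R := by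
  rw [qtB_eq_comm_mul_lsmul₂, ← Module.End.mul_eq_comp, mul_assoc, lsmul₂_mul_map R hf hg,
    ← mul_assoc, Module.End.mul_eq_comp _ (map f g), ← map_comp_comm_eq]
  rfl

theorem lsmul₃_mul_leftComm (S : H ⊗[k] (H ⊗[k] H)) :
    lsmul₃ k H V S * (TensorProduct.leftComm k V V V).toLinearMap
      = (TensorProduct.leftComm k V V V).toLinearMap
          * lsmul₃ k H V (Algebra.TensorProduct.leftComm k H H H S) := by
  have h : LinearMap.mulRight k (TensorProduct.leftComm k V V V).toLinearMap ∘ₗ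
      (lsmul₃ k H V).toLinearMap
        = LinearMap.mulLeft k (TensorProduct.leftComm k V V V).toLinearMap ∘ₗ
            ((lsmul₃ k H V).comp
              (Algebra.TensorProduct.leftComm k H H H).toAlgHom).toLinearMap := by
    ext x y z u v w
    simp [lsmul₃, lsmul₂, Module.endTensorEndAlgHom_apply]
  exact LinearMap.congr_fun h S

theorem lsmul₃_mul_lTensor_comm (S : H ⊗[k] (H ⊗[k] H)) :
    lsmul₃ k H V S * (TensorProduct.comm k V V).toLinearMap.lTensor V
      = (TensorProduct.comm k V V).toLinearMap.lTensor V * lsmul₃ k H V (swap₂₃ k H S) := by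
  have h : LinearMap.mulRight k ((TensorProduct.comm k V V).toLinearMap.lTensor V) ∘ₗ
      (lsmul₃ k H V).toLinearMap
        = LinearMap.mulLeft k ((TensorProduct.comm k V V).toLinearMap.lTensor V) ∘ₗ
            ((lsmul₃ k H V).comp (swap₂₃ k H).toAlgHom).toLinearMap := by
    ext x y z u v w
    simp [lsmul₃, lsmul₂, swap₂₃, Module.endTensorEndAlgHom_apply]
  exact LinearMap.congr_fun h S

theorem lTensor_qtB (R : H ⊗[k] H) :
    (qtB k H V R).lTensor V
      = (TensorProduct.comm k V V).toLinearMap.lTensor V * lsmul₃ k H V (1 ⊗ₜ R) := by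
  rw [qtB_eq_comm_mul_lsmul₂, LinearMap.lTensor_mul, lsmul₃, AlgHom.comp_apply,
    Algebra.TensorProduct.map_tmul, map_one]
  rfl

theorem assoc_conj_rTensor_qtB (R : H ⊗[k] H) :
    (TensorProduct.assoc k V V V).conjAlgEquiv k ((qtB k H V R).rTensor V)
      = (TensorProduct.leftComm k V V V).toLinearMap * lsmul₃ k H V (iota12 k H R) := by
  have hflip : (TensorProduct.assoc k V V V).conjAlgEquiv k
      ((TensorProduct.comm k V V).toLinearMap.rTensor V)
        = (TensorProduct.leftComm k V V V).toLinearMap := by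
    ext u v w; rfl
  have hact : (TensorProduct.assoc k V V V).conjAlgEquiv k ((lsmul₂ k H V R).rTensor V)
      = lsmul₃ k H V (iota12 k H R) := by
    induction R using TensorProduct.induction_on with
    | zero => simp
    | add S T hS hT => simp only [map_add, LinearMap.rTensor_add, hS, hT]
    | tmul x y =>
      ext u v w
      simp [lsmul₃, lsmul₂, iota12, Module.endTensorEndAlgHom_apply]
  rw [qtB_eq_comm_mul_lsmul₂, LinearMap.rTensor_mul, map_mul, hflip, hact]

theorem qtB_braid (R : H ⊗[k] H)
    (hR : iota12 k H R * iota13 k H R * (1 ⊗ₜ R) = (1 ⊗ₜ R) * iota13 k H R * iota12 k H R) :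
    leftTwist LinearMap.id (qtB k H V R) ∘ₗ (qtB k H V R).rTensor V ∘ₗ
        leftTwist LinearMap.id (qtB k H V R)
      = (qtB k H V R).rTensor V ∘ₗ leftTwist LinearMap.id (qtB k H V R) ∘ₗ
          (qtB k H V R).rTensor V := by
  set T₁₂ := (TensorProduct.leftComm k V V V).toLinearMap
  set T₂₃ := (TensorProduct.comm k V V).toLinearMap.lTensor V
  set ρ := lsmul₃ k H V
  have hT : T₂₃ * (T₁₂ * T₂₃) = T₁₂ * (T₂₃ * T₁₂) := by ext u v w; rfl
  have f₁₂ : ∀ S x,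
      ρ S * (T₁₂ * x) = T₁₂ * (ρ (Algebra.TensorProduct.leftComm k H H H S) * x) := by
    intro S x; rw [← mul_assoc, lsmul₃_mul_leftComm, mul_assoc]
  have f₂₃ : ∀ S x, ρ S * (T₂₃ * x) = T₂₃ * (ρ (swap₂₃ k H S) * x) := by
    intro S x; rw [← mul_assoc, lsmul₃_mul_lTensor_comm, mul_assoc]
  -- Moving the flips to the front leaves `T₂₃ T₁₂ T₂₃ ρ(R₁₂ R₁₃ R₂₃)` and
  -- `T₁₂ T₂₃ T₁₂ ρ(R₂₃ R₁₃ R₁₂)`.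
  have hB : T₂₃ * ρ (1 ⊗ₜ R) * (T₁₂ * ρ (iota12 k H R) * (T₂₃ * ρ (1 ⊗ₜ R)))
      = T₁₂ * ρ (iota12 k H R) * (T₂₃ * ρ (1 ⊗ₜ R) * (T₁₂ * ρ (iota12 k H R))) := by
    simp only [mul_assoc, f₁₂, f₂₃, leftComm_one_tmul, leftComm_iota13, swap₂₃_iota12,
      swap₂₃_iota13]
    simp only [← mul_assoc, hT, ← map_mul, hR]
  have h₂₃ : leftTwist LinearMap.id (qtB k H V R)
      = (TensorProduct.assoc k V V V).symm.conjAlgEquiv k (T₂₃ * ρ (1 ⊗ₜ R)) := by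
    rw [leftTwist_eq_conjAlgEquiv, ← lTensor_qtB]; rfl
  have h₁₂ : (qtB k H V R).rTensor V
      = (TensorProduct.assoc k V V V).symm.conjAlgEquiv k (T₁₂ * ρ (iota12 k H R)) := by
    rw [← assoc_conj_rTensor_qtB, ← LinearEquiv.symm_conjAlgEquiv, AlgEquiv.symm_apply_apply]
  rw [h₂₃, h₁₂]
  simp only [← Module.End.mul_eq_comp, ← map_mul, hB]

end Action

section QT

variable {k H V : Type*} [Field k] [Ring H] [Bialgebra k H]
  [AddCommGroup V] [Module k V] [Module H V]
  [IsScalarTower k H V] [SMulCommClass k H V]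

theorem stmt14_general (R : H ⊗[k] H)
    -- τ(Δ x) = R Δ(x) R⁻¹, in the equivalent form τ(Δ x) * R = R * Δ(x)
    (hR1 : ∀ x : H,
      (TensorProduct.comm k H H) (Coalgebra.comul x) * R = R * Coalgebra.comul x)
    -- (Δ ⊗ id)(R) = R₁₃ R₂₃
    (hR2 : (TensorProduct.assoc k H H H)
        ((TensorProduct.map Coalgebra.comul LinearMap.id) R)
      = iota13 k H R * ((1 : H) ⊗ₜ[k] R))
    (α : V →ₗ[k] V) (hαmod : ∀ (x : H) (v : V), α (x • v) = x • α v) :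
    (TensorProduct.map α α ∘ₗ qtB k H V R = qtB k H V R ∘ₗ TensorProduct.map α α) ∧
    (leftTwist α (qtB k H V R) ∘ₗ TensorProduct.map (qtB k H V R) α ∘ₗ
        leftTwist α (qtB k H V R)
      = TensorProduct.map (qtB k H V R) α ∘ₗ leftTwist α (qtB k H V R) ∘ₗ
          TensorProduct.map (qtB k H V R) α) := by
  have hid : ∀ (x : H) (v : V), (LinearMap.id : V →ₗ[k] V) (x • v) = x • v := fun _ _ => rfl
  exact ⟨(qtB_comp_map R hαmod hαmod).symm,
    leftTwist_hom_braid_of_braid (qtB_comp_map R hαmod hid) (qtB_comp_map R hid hαmod)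
      (qtB_braid R (quantum_yang_baxter R hR1 hR2))⟩

theorem stmt14 (R : H ⊗[k] H) (hRunit : IsUnit R)
    -- τ(Δ x) = R Δ(x) R⁻¹, in the equivalent form τ(Δ x) * R = R * Δ(x)
    (hR1 : ∀ x : H,
      (TensorProduct.comm k H H) (Coalgebra.comul x) * R = R * Coalgebra.comul x)
    -- (Δ ⊗ id)(R) = R₁₃ R₂₃
    (hR2 : (TensorProduct.assoc k H H H)
        ((TensorProduct.map Coalgebra.comul LinearMap.id) R)
      = iota13 k H R * ((1 : H) ⊗ₜ[k] R))
    -- (id ⊗ Δ)(R) = R₁₃ R₁₂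
    (hR3 : (TensorProduct.map LinearMap.id Coalgebra.comul) R
      = iota13 k H R * iota12 k H R)
    (α : V →ₗ[k] V) (hαmod : ∀ (x : H) (v : V), α (x • v) = x • α v) :
    (TensorProduct.map α α ∘ₗ qtB k H V R = qtB k H V R ∘ₗ TensorProduct.map α α) ∧
    (leftTwist α (qtB k H V R) ∘ₗ TensorProduct.map (qtB k H V R) α ∘ₗ
        leftTwist α (qtB k H V R)
      = TensorProduct.map (qtB k H V R) α ∘ₗ leftTwist α (qtB k H V R) ∘ₗ
          TensorProduct.map (qtB k H V R) α) :=
  stmt14_general R hR1 hR2 α hαmod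

end QT
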